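/- Let σ(h) = h − 1 and let P ∈ ℂ[h] be a nonzero polynomial with P(0) = 0. With V the space of complex sequences indexed by ℕ, U₁ the right shift, U₋₁ the left shift, and N the diagonal operator N·e_i = −i·e_i, the assignment h ↦ N, x ↦ U₋₁, y ↦ P(N)·U₁ defines an injective algebra homomorphism ρ from the generalized Weyl algebra ℂ[h](σ, P) to End(V). -/
import Mathlib


open FreeAlgebra Polynomial

/-- Defining relations of the generalized Weyl algebra `ℂ[h](σ, P)`, presented as the
`ℂ`-algebra on three generators `h = ι 0`, `x = ι 1`, `y = ι 2`, subject to
`x·p(h) = p(σ(h))·x`, `y·p(h) = p(σ⁻¹(h))·y`, `y·x = P(h)` and `x·y = P(σ(h))`. -/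
inductive GWAcRel (σ : Polynomial ℂ ≃ₐ[ℂ] Polynomial ℂ) (P : Polynomial ℂ) :
    FreeAlgebra ℂ (Fin 3) → FreeAlgebra ℂ (Fin 3) → Prop
  | xh (p : Polynomial ℂ) :
      GWAcRel σ P (ι ℂ 1 * aeval (ι ℂ 0) p) (aeval (ι ℂ 0) (σ p) * ι ℂ 1)
  | yh (p : Polynomial ℂ) :
      GWAcRel σ P (ι ℂ 2 * aeval (ι ℂ 0) p) (aeval (ι ℂ 0) (σ.symm p) * ι ℂ 2)
  | yx : GWAcRel σ P (ι ℂ 2 * ι ℂ 1) (aeval (ι ℂ 0) P)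
  | xy : GWAcRel σ P (ι ℂ 1 * ι ℂ 2) (aeval (ι ℂ 0) (σ P))

/-- The generalized Weyl algebra `ℂ[h](σ, P)`. -/
abbrev GWAc (σ : Polynomial ℂ ≃ₐ[ℂ] Polynomial ℂ) (P : Polynomial ℂ) :=
  RingQuot (GWAcRel σ P)

/-- The generator `h` of `ℂ[h](σ, P)`. -/
noncomputable def GWAc.h (σ : Polynomial ℂ ≃ₐ[ℂ] Polynomial ℂ) (P : Polynomial ℂ) :
    GWAc σ P := RingQuot.mkAlgHom ℂ (GWAcRel σ P) (ι ℂ 0)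

/-- The generator `x` of `ℂ[h](σ, P)`. -/
noncomputable def GWAc.x (σ : Polynomial ℂ ≃ₐ[ℂ] Polynomial ℂ) (P : Polynomial ℂ) :
    GWAc σ P := RingQuot.mkAlgHom ℂ (GWAcRel σ P) (ι ℂ 1)

/-- The generator `y` of `ℂ[h](σ, P)`. -/
noncomputable def GWAc.y (σ : Polynomial ℂ ≃ₐ[ℂ] Polynomial ℂ) (P : Polynomial ℂ) :
    GWAc σ P := RingQuot.mkAlgHom ℂ (GWAcRel σ P) (ι ℂ 2)

/-- The diagonal operator on the space `V = ℕ → ℂ` of complex sequences, multiplying the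
`n`-th coordinate by `d n`. -/
noncomputable def diagOp (d : ℕ → ℂ) : Module.End ℂ (ℕ → ℂ) where
  toFun f := fun n => d n * f n
  map_add' f g := by funext n; simp [mul_add]
  map_smul' c f := by funext n; simp [smul_eq_mul]; ring

/-- The left shift `U₋₁` on sequences: `U₋₁·e₀ = 0`, `U₋₁·e_{i+1} = e_i`. -/
noncomputable def Um1 : Module.End ℂ (ℕ → ℂ) := LinearMap.funLeft ℂ ℂ Nat.succ

/-- The right shift `U₁` on sequences: `U₁·e_i = e_{i+1}`. -/
noncomputable def U1 : Module.End ℂ (ℕ → ℂ) :=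
  diagOp (fun n => if n = 0 then 0 else 1) ∘ₗ LinearMap.funLeft ℂ ℂ Nat.pred

/-- The diagonal operator `N` with `N·e_i = -i·e_i`. -/
noncomputable def Nop : Module.End ℂ (ℕ → ℂ) := diagOp (fun n => -(n : ℂ))

/-- The diagonal operator `G` with `G·e_i = qⁱ·e_i`. -/
noncomputable def Gop (q : ℂ) : Module.End ℂ (ℕ → ℂ) := diagOp (fun n => q ^ n)

/-- The projection `e₀₀` onto the `0`-th coordinate. -/
noncomputable def e00 : Module.End ℂ (ℕ → ℂ) := diagOp (fun n => if n = 0 then 1 else 0)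


section Aux13
open Polynomial

lemma diagOp_apply (d f : ℕ → ℂ) (n : ℕ) : diagOp d f n = d n * f n := rfl

/-- `diagOp` as an algebra homomorphism. -/
noncomputable def diagA : (ℕ → ℂ) →ₐ[ℂ] Module.End ℂ (ℕ → ℂ) where
  toFun := diagOp
  map_one' := LinearMap.ext fun f => funext fun n => by simp [diagOp_apply]
  map_mul' d e := LinearMap.ext fun f => funext fun n => by
    simp [diagOp_apply, Module.End.mul_apply]; ring
  map_zero' := LinearMap.ext fun f => funext fun n => by simp [diagOp_apply]
  map_add' d e := LinearMap.ext fun f => funext fun n => by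
    simp [diagOp_apply]; ring
  commutes' c := LinearMap.ext fun f => funext fun n => by
    simp [diagOp_apply, Module.algebraMap_end_apply]

lemma aeval_diagOp (d : ℕ → ℂ) (r : Polynomial ℂ) :
    aeval (diagOp d) r = diagOp fun n => r.eval (d n) := by
  have h2 : aeval d r = fun n => r.eval (d n) := by
    funext n
    have h3 : aeval ((Pi.evalAlgHom ℂ (fun _ => ℂ) n) d) r
        = (Pi.evalAlgHom ℂ (fun _ => ℂ) n) (aeval d r) := aeval_algHom_apply _ d r
    simpa [← coe_aeval_eq_eval] using h3.symm

  calc aeval (diagOp d) r = diagA (aeval d r) := aeval_algHom_apply diagA d r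
    _ = diagA fun n => r.eval (d n) := by rw [h2]
    _ = diagOp fun n => r.eval (d n) := rfl

lemma aeval_Nop (r : Polynomial ℂ) :
    aeval Nop r = diagOp fun n => r.eval (-(n : ℂ)) := aeval_diagOp _ r

/-- The diagonal coefficient sequence of `Y = P(N)·U₁`. -/
noncomputable def cc (P : Polynomial ℂ) : ℕ → ℂ :=
  fun n => (if n = 0 then 0 else 1) * P.eval (-(n : ℂ))

lemma Um1_apply (f : ℕ → ℂ) (n : ℕ) : Um1 f n = f (n + 1) := rfl

lemma Yop_apply (P : Polynomial ℂ) (f : ℕ → ℂ) (n : ℕ) :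
    (aeval Nop P * U1) f n = cc P n * f n.pred := by
  have hU : U1 f n = (if n = 0 then (0:ℂ) else 1) * f n.pred := rfl
  calc (aeval Nop P * U1) f n = (aeval Nop P) (U1 f) n := rfl
    _ = P.eval (-(n:ℂ)) * ((if n = 0 then (0:ℂ) else 1) * f n.pred) := by
        rw [aeval_Nop, diagOp_apply, hU]
    _ = cc P n * f n.pred := by simp only [cc]; ring

lemma eval_sigma (σ : Polynomial ℂ ≃ₐ[ℂ] Polynomial ℂ) (hσ : σ X = X - C 1)
    (p : Polynomial ℂ) (t : ℂ) : (σ p).eval t = p.eval (t - 1) := by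
  have h := aeval_algHom_apply σ X p
  rw [aeval_X_left_apply, hσ] at h
  rw [← h, ← comp_eq_aeval, eval_comp]
  simp

lemma sigma_symm_X (σ : Polynomial ℂ ≃ₐ[ℂ] Polynomial ℂ) (hσ : σ X = X - C 1) :
    σ.symm X = X + C 1 := by
  apply σ.injective
  rw [AlgEquiv.apply_symm_apply, map_add, hσ]
  rw [show (C 1 : Polynomial ℂ) = 1 from by simp, map_one]
  ring

lemma eval_sigma_symm (σ : Polynomial ℂ ≃ₐ[ℂ] Polynomial ℂ) (hσ : σ X = X - C 1)
    (p : Polynomial ℂ) (t : ℂ) : (σ.symm p).eval t = p.eval (t + 1) := by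
  have h := aeval_algHom_apply σ.symm X p
  rw [aeval_X_left_apply, sigma_symm_X σ hσ] at h
  rw [← h, ← comp_eq_aeval, eval_comp]
  simp

end Aux13
section Aux13b
open Polynomial

lemma opE1 (σ : Polynomial ℂ ≃ₐ[ℂ] Polynomial ℂ) (hσ : σ X = X - C 1) (p : Polynomial ℂ) :
    Um1 * aeval Nop p = aeval Nop (σ p) * Um1 := by
  refine LinearMap.ext fun f => funext fun n => ?_
  calc (Um1 * aeval Nop p) f n = (aeval Nop p f) (n + 1) := rfl
    _ = p.eval (-((n:ℂ)+1)) * f (n+1) := by rw [aeval_Nop, diagOp_apply]; push_cast; ring_nf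
    _ = (σ p).eval (-(n:ℂ)) * Um1 f n := by
        rw [eval_sigma σ hσ, Um1_apply]; ring_nf
    _ = (aeval Nop (σ p) * Um1) f n := by rw [Module.End.mul_apply, aeval_Nop, diagOp_apply]

lemma opE2 (σ : Polynomial ℂ ≃ₐ[ℂ] Polynomial ℂ) (hσ : σ X = X - C 1)
    (P p : Polynomial ℂ) :
    (aeval Nop P * U1) * aeval Nop p = aeval Nop (σ.symm p) * (aeval Nop P * U1) := by
  refine LinearMap.ext fun f => funext fun n => ?_
  have lhs : ((aeval Nop P * U1) * aeval Nop p) f n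
      = cc P n * (p.eval (-(n.pred:ℂ)) * f n.pred) := by
    rw [Module.End.mul_apply, Yop_apply, aeval_Nop, diagOp_apply]
  have rhs : (aeval Nop (σ.symm p) * (aeval Nop P * U1)) f n
      = p.eval (-(n:ℂ) + 1) * (cc P n * f n.pred) := by
    rw [Module.End.mul_apply, aeval_Nop, diagOp_apply, Yop_apply, eval_sigma_symm σ hσ]
  rw [lhs, rhs]
  cases n with
  | zero => simp [cc]
  | succ k => simp only [Nat.pred_succ]; push_cast; ring

lemma opE3 (σ : Polynomial ℂ ≃ₐ[ℂ] Polynomial ℂ) (hσ : σ X = X - C 1)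
    (P : Polynomial ℂ) (hP0 : P.eval 0 = 0) :
    (aeval Nop P * U1) * Um1 = aeval Nop P := by
  refine LinearMap.ext fun f => funext fun n => ?_
  have lhs : ((aeval Nop P * U1) * Um1) f n = cc P n * f (n.pred + 1) := by
    rw [Module.End.mul_apply, Yop_apply, Um1_apply]
  rw [lhs, aeval_Nop, diagOp_apply]
  cases n with
  | zero => simp [cc, hP0]
  | succ k => simp [cc]

lemma opE4 (σ : Polynomial ℂ ≃ₐ[ℂ] Polynomial ℂ) (hσ : σ X = X - C 1) (P : Polynomial ℂ) :
    Um1 * (aeval Nop P * U1) = aeval Nop (σ P) := by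
  refine LinearMap.ext fun f => funext fun n => ?_
  have lhs : (Um1 * (aeval Nop P * U1)) f n = cc P (n+1) * f n := by
    rw [Module.End.mul_apply]
    show (aeval Nop P * U1) f (n+1) = _
    rw [Yop_apply]
    simp [Nat.pred_succ]
  rw [lhs, aeval_Nop, diagOp_apply, eval_sigma σ hσ]
  simp only [cc, Nat.succ_ne_zero, if_false, one_mul]
  push_cast; ring_nf

lemma Um1_pow (m : ℕ) (f : ℕ → ℂ) (n : ℕ) : (Um1 ^ m) f n = f (n + m) := by
  induction m generalizing f n with
  | zero => simp
  | succ k ih =>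
      rw [pow_succ, Module.End.mul_apply, ih, Um1_apply, add_assoc]

lemma diagOp_single (d : ℕ → ℂ) (i : ℕ) :
    diagOp d (Pi.single i 1) = d i • (Pi.single i 1 : ℕ → ℂ) := by
  funext n
  rw [diagOp_apply]
  rcases eq_or_ne n i with rfl | h
  · simp
  · simp [Pi.single_apply, h]

lemma Yop_single (P : Polynomial ℂ) (i : ℕ) :
    (aeval Nop P * U1) ((Pi.single i 1 : ℕ → ℂ)) = cc P (i+1) • (Pi.single (i+1) 1 : ℕ → ℂ) := by
  funext n
  rw [Yop_apply]
  cases n with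
  | zero => simp [cc, Pi.single_apply]
  | succ k =>
      rcases eq_or_ne k i with rfl | h
      · simp [Pi.single_apply]
      · simp [Pi.single_apply, h, Ne.symm, fun hh => h (Nat.succ_injective hh)]

lemma Yop_pow_single (P : Polynomial ℂ) (m i : ℕ) :
    ((aeval Nop P * U1) ^ m) ((Pi.single i 1 : ℕ → ℂ))
      = (∏ k ∈ Finset.range m, cc P (i+1+k)) • (Pi.single (i+m) 1 : ℕ → ℂ) := by
  induction m generalizing i with
  | zero => simp
  | succ k ih =>
      rw [pow_succ, Module.End.mul_apply, Yop_single, map_smul, ih, smul_smul,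
        Finset.prod_range_succ']
      have h1 : i + 1 + k = i + (k + 1) := by omega
      rw [h1]
      congr 1
      rw [add_zero, mul_comm]
      congr 1
      exact Finset.prod_congr rfl fun j _ => by congr 1; omega

end Aux13b
section Aux13c
open Polynomial

variable (σ : Polynomial ℂ ≃ₐ[ℂ] Polynomial ℂ) (P : Polynomial ℂ)

/-- The canonical map `ℂ[X] → ℂ[h](σ,P)`, `r ↦ r(h)`. -/
noncomputable def φg : Polynomial ℂ →ₐ[ℂ] GWAc σ P := aeval (GWAc.h σ P)

lemma mk_aeval (p : Polynomial ℂ) :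
    RingQuot.mkAlgHom ℂ (GWAcRel σ P) (aeval (ι ℂ 0) p) = φg σ P p :=
  (aeval_algHom_apply (RingQuot.mkAlgHom ℂ (GWAcRel σ P)) (ι ℂ 0) p).symm

lemma relR1 (p : Polynomial ℂ) :
    GWAc.x σ P * φg σ P p = φg σ P (σ p) * GWAc.x σ P := by
  have h := RingQuot.mkAlgHom_rel ℂ (GWAcRel.xh (σ := σ) (P := P) p)
  rw [map_mul, map_mul, mk_aeval, mk_aeval] at h
  exact h

lemma relR2 (p : Polynomial ℂ) :
    GWAc.y σ P * φg σ P p = φg σ P (σ.symm p) * GWAc.y σ P := by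
  have h := RingQuot.mkAlgHom_rel ℂ (GWAcRel.yh (σ := σ) (P := P) p)
  rw [map_mul, map_mul, mk_aeval, mk_aeval] at h
  exact h

lemma relR3 : GWAc.y σ P * GWAc.x σ P = φg σ P P := by
  have h := RingQuot.mkAlgHom_rel ℂ (GWAcRel.yx (σ := σ) (P := P))
  rw [map_mul, mk_aeval] at h
  exact h

lemma relR4 : GWAc.x σ P * GWAc.y σ P = φg σ P (σ P) := by
  have h := RingQuot.mkAlgHom_rel ℂ (GWAcRel.xy (σ := σ) (P := P))
  rw [map_mul, mk_aeval] at h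
  exact h

lemma relR1' (p : Polynomial ℂ) :
    φg σ P p * GWAc.x σ P = GWAc.x σ P * φg σ P (σ.symm p) := by
  have h := (relR1 σ P (σ.symm p)).symm
  rwa [AlgEquiv.apply_symm_apply] at h

lemma relR2' (p : Polynomial ℂ) :
    φg σ P p * GWAc.y σ P = GWAc.y σ P * φg σ P (σ p) := by
  have h := (relR2 σ P (σ p)).symm
  rwa [AlgEquiv.symm_apply_apply] at h

/-- The "normal form" linear map `(p, q) ↦ Σ xᵐ pₘ(h) + Σ yᵐ⁺¹ qₘ(h)`. -/
noncomputable def Lmap : ((ℕ →₀ Polynomial ℂ) × (ℕ →₀ Polynomial ℂ)) →ₗ[ℂ] GWAc σ P :=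
  ((Finsupp.lsum ℂ fun m =>
      (LinearMap.mulLeft ℂ (GWAc.x σ P ^ m)).comp (φg σ P).toLinearMap).comp
    (LinearMap.fst ℂ _ _)) +
  ((Finsupp.lsum ℂ fun m =>
      (LinearMap.mulLeft ℂ (GWAc.y σ P ^ (m+1))).comp (φg σ P).toLinearMap).comp
    (LinearMap.snd ℂ _ _))

lemma Lmap_apply (p q : ℕ →₀ Polynomial ℂ) :
    Lmap σ P (p, q) = (p.sum fun m r => GWAc.x σ P ^ m * φg σ P r)
      + (q.sum fun m r => GWAc.y σ P ^ (m+1) * φg σ P r) := by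
  simp [Lmap, Finsupp.sum, Finsupp.lsum_apply, LinearMap.mulLeft_apply]

lemma mem_range_x (m : ℕ) (r : Polynomial ℂ) :
    GWAc.x σ P ^ m * φg σ P r ∈ LinearMap.range (Lmap σ P) :=
  ⟨(Finsupp.single m r, 0), by
    rw [Lmap_apply, Finsupp.sum_single_index (by simp), Finsupp.sum_zero_index, add_zero]⟩

lemma mem_range_y (m : ℕ) (r : Polynomial ℂ) :
    GWAc.y σ P ^ (m+1) * φg σ P r ∈ LinearMap.range (Lmap σ P) :=
  ⟨(0, Finsupp.single m r), by
    rw [Lmap_apply, Finsupp.sum_single_index (by simp), Finsupp.sum_zero_index, zero_add]⟩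

lemma mem_range_phi (r : Polynomial ℂ) :
    φg σ P r ∈ LinearMap.range (Lmap σ P) := by
  simpa using mem_range_x σ P 0 r

lemma mono_h (a : GWAc σ P) (r : Polynomial ℂ) :
    a * φg σ P r * GWAc.h σ P = a * φg σ P (r * X) := by
  have hh : GWAc.h σ P = φg σ P X := (aeval_X _).symm
  rw [hh, mul_assoc, ← map_mul]

lemma yx_pow (m : ℕ) :
    GWAc.y σ P ^ (m+1) * GWAc.x σ P = GWAc.y σ P ^ m * φg σ P P := by
  rw [pow_succ, mul_assoc, relR3]

lemma xy_pow (m : ℕ) :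
    GWAc.x σ P ^ (m+1) * GWAc.y σ P = GWAc.x σ P ^ m * φg σ P (σ P) := by
  rw [pow_succ, mul_assoc, relR4]

lemma mul_h_mem {s : GWAc σ P} (hs : s ∈ LinearMap.range (Lmap σ P)) :
    s * GWAc.h σ P ∈ LinearMap.range (Lmap σ P) := by
  obtain ⟨⟨p, q⟩, rfl⟩ := hs
  rw [Lmap_apply, add_mul, Finsupp.sum, Finsupp.sum, Finset.sum_mul, Finset.sum_mul]
  refine add_mem (Submodule.sum_mem _ fun m _ => ?_) (Submodule.sum_mem _ fun m _ => ?_)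
  · rw [mono_h]; exact mem_range_x σ P m _
  · rw [mono_h]; exact mem_range_y σ P m _

lemma mul_x_mem {s : GWAc σ P} (hs : s ∈ LinearMap.range (Lmap σ P)) :
    s * GWAc.x σ P ∈ LinearMap.range (Lmap σ P) := by
  obtain ⟨⟨p, q⟩, rfl⟩ := hs
  rw [Lmap_apply, add_mul, Finsupp.sum, Finsupp.sum, Finset.sum_mul, Finset.sum_mul]
  refine add_mem (Submodule.sum_mem _ fun m _ => ?_) (Submodule.sum_mem _ fun m _ => ?_)
  · rw [mul_assoc, relR1', ← mul_assoc, ← pow_succ]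
    exact mem_range_x σ P (m+1) _
  · rw [mul_assoc, relR1', ← mul_assoc, yx_pow, mul_assoc, ← map_mul]
    cases m with
    | zero => simpa using mem_range_x σ P 0 (P * σ.symm (q 0))
    | succ k => exact mem_range_y σ P k _

lemma mul_y_mem {s : GWAc σ P} (hs : s ∈ LinearMap.range (Lmap σ P)) :
    s * GWAc.y σ P ∈ LinearMap.range (Lmap σ P) := by
  obtain ⟨⟨p, q⟩, rfl⟩ := hs
  rw [Lmap_apply, add_mul, Finsupp.sum, Finsupp.sum, Finset.sum_mul, Finset.sum_mul]
  refine add_mem (Submodule.sum_mem _ fun m _ => ?_) (Submodule.sum_mem _ fun m _ => ?_)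
  · rw [mul_assoc, relR2', ← mul_assoc]
    cases m with
    | zero => simpa using mem_range_y σ P 0 _
    | succ k =>
        rw [xy_pow, mul_assoc, ← map_mul]
        exact mem_range_x σ P k _
  · rw [mul_assoc, relR2', ← mul_assoc, ← pow_succ]
    exact mem_range_y σ P (m+1) _

lemma Lmap_surjective : Function.Surjective (Lmap σ P) := by
  have key : ∀ b : FreeAlgebra ℂ (Fin 3), ∀ s ∈ LinearMap.range (Lmap σ P),
      s * RingQuot.mkAlgHom ℂ (GWAcRel σ P) b ∈ LinearMap.range (Lmap σ P) := by
    intro b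
    induction b using FreeAlgebra.induction with
    | grade0 c =>
        intro s hs
        rw [AlgHom.commutes, ← Algebra.commutes, ← Algebra.smul_def]
        exact Submodule.smul_mem _ _ hs
    | grade1 i =>
        intro s hs
        fin_cases i
        · exact mul_h_mem σ P hs
        · exact mul_x_mem σ P hs
        · exact mul_y_mem σ P hs
    | mul a b ha hb =>
        intro s hs
        rw [map_mul, ← mul_assoc]
        exact hb _ (ha _ hs)
    | add a b ha hb =>
        intro s hs
        rw [map_add, mul_add]
        exact add_mem (ha _ hs) (hb _ hs)
  intro a
  obtain ⟨b, rfl⟩ := RingQuot.mkAlgHom_surjective ℂ (GWAcRel σ P) a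

  have h1 : (1 : GWAc σ P) ∈ LinearMap.range (Lmap σ P) := by
    simpa using mem_range_x σ P 0 1
  simpa using key b 1 h1

end Aux13c
section Aux13d
open Polynomial

lemma sum_eval (P : Polynomial ℂ) (p q : ℕ →₀ Polynomial ℂ)
    (h0 : (p.sum fun m r => Um1 ^ m * aeval Nop r)
        + (q.sum fun m r => (aeval Nop P * U1) ^ (m+1) * aeval Nop r) = 0)
    (i j : ℕ) :
    (∑ m ∈ p.support, (p m).eval (-(i : ℂ)) * (if j + m = i then 1 else 0))
      + (∑ m ∈ q.support, ((∏ k ∈ Finset.range (m+1), cc P (i+1+k)) * (q m).eval (-(i:ℂ)))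
          * (if j = i + m + 1 then 1 else 0)) = 0 := by
  have hterm1 : ∀ m : ℕ, (Um1 ^ m * aeval Nop (p m)) (Pi.single i 1) j
      = (p m).eval (-(i:ℂ)) * (if j + m = i then 1 else 0) := by
    intro m
    calc (Um1 ^ m * aeval Nop (p m)) (Pi.single i 1) j
        = (Um1 ^ m) ((aeval Nop (p m)) (Pi.single i 1)) j := rfl
      _ = (p m).eval (-(i:ℂ)) * (Um1 ^ m) (Pi.single i 1) j := by
          rw [aeval_Nop (p m), diagOp_single, map_smul]; rfl
      _ = (p m).eval (-(i:ℂ)) * (if j + m = i then 1 else 0) := by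
          rw [Um1_pow, Pi.single_apply]
  have hterm2 : ∀ m : ℕ, ((aeval Nop P * U1) ^ (m+1) * aeval Nop (q m)) (Pi.single i 1) j
      = ((∏ k ∈ Finset.range (m+1), cc P (i+1+k)) * (q m).eval (-(i:ℂ)))
          * (if j = i + m + 1 then 1 else 0) := by
    intro m
    calc ((aeval Nop P * U1) ^ (m+1) * aeval Nop (q m)) (Pi.single i 1) j
        = ((aeval Nop P * U1) ^ (m+1)) ((aeval Nop (q m)) (Pi.single i 1)) j := rfl
      _ = (q m).eval (-(i:ℂ)) * ((aeval Nop P * U1) ^ (m+1)) (Pi.single i 1) j := by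
          rw [aeval_Nop (q m), diagOp_single, map_smul]; rfl
      _ = (q m).eval (-(i:ℂ)) * ((∏ k ∈ Finset.range (m+1), cc P (i+1+k))
            * (Pi.single (i+m+1) 1 : ℕ → ℂ) j) := by
          rw [Yop_pow_single]
          have : i + (m+1) = i + m + 1 := by omega
          rw [this]; rfl
      _ = ((∏ k ∈ Finset.range (m+1), cc P (i+1+k)) * (q m).eval (-(i:ℂ)))
            * (if j = i + m + 1 then 1 else 0) := by
          rw [Pi.single_apply]; ring
  have h1 := congrFun (congrArg (fun T : Module.End ℂ (ℕ → ℂ) => T (Pi.single i 1)) h0) j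
  simp only [LinearMap.add_apply, LinearMap.zero_apply, Pi.add_apply, Pi.zero_apply] at h1
  rw [Finsupp.sum, Finsupp.sum, LinearMap.sum_apply, LinearMap.sum_apply,
    Finset.sum_apply, Finset.sum_apply] at h1
  rw [Finset.sum_congr rfl (fun m _ => hterm1 m), Finset.sum_congr rfl (fun m _ => hterm2 m)]
    at h1
  exact h1

lemma coeffs_zero (P : Polynomial ℂ) (hP : P ≠ 0) (p q : ℕ →₀ Polynomial ℂ)
    (h0 : (p.sum fun m r => Um1 ^ m * aeval Nop r)
        + (q.sum fun m r => (aeval Nop P * U1) ^ (m+1) * aeval Nop r) = 0) :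
    p = 0 ∧ q = 0 := by
  have key := sum_eval P p q h0
  constructor
  · apply Finsupp.ext
    intro m0
    rw [Finsupp.coe_zero, Pi.zero_apply]
    by_cases hm : m0 ∈ p.support
    swap
    · exact Finsupp.notMem_support_iff.mp hm
    apply Polynomial.eq_zero_of_infinite_isRoot
    refine Set.infinite_of_injective_forall_mem
      (f := fun j : ℕ => -(((j + m0 : ℕ)) : ℂ)) ?_ ?_
    · intro a b hab
      simp only [neg_inj, Nat.cast_inj] at hab
      omega
    · intro j
      have h2 := key (j + m0) j
      have hq0 : (∑ m ∈ q.support,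
          (∏ k ∈ Finset.range (m + 1), cc P (j + m0 + 1 + k)) * (q m).eval (-((j + m0 : ℕ):ℂ)) *
            if j = j + m0 + m + 1 then 1 else 0) = 0 :=
        Finset.sum_eq_zero fun m _ => by
          rw [if_neg (by omega : ¬ j = j + m0 + m + 1), mul_zero]
      rw [hq0, add_zero] at h2
      simp only [add_right_inj, mul_ite, mul_one, mul_zero] at h2
      rw [Finset.sum_ite_eq' p.support m0
        (fun m => (p m).eval (-((j + m0 : ℕ) : ℂ))), if_pos hm] at h2
      exact h2
  · apply Finsupp.ext
    intro m0
    rw [Finsupp.coe_zero, Pi.zero_apply]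
    by_cases hm : m0 ∈ q.support
    swap
    · exact Finsupp.notMem_support_iff.mp hm
    apply Polynomial.eq_zero_of_infinite_isRoot
    have hinj : ∀ k : ℕ, Function.Injective (fun i : ℕ => -(((i + 1 + k : ℕ)) : ℂ)) := by
      intro k a b hab
      simp only [neg_inj, Nat.cast_inj] at hab
      omega
    set Bad : Set ℕ :=
      ⋃ k ∈ (↑(Finset.range (m0+1)) : Set ℕ),
        ((fun i : ℕ => -(((i + 1 + k : ℕ)) : ℂ)) ⁻¹' {z | P.IsRoot z}) with hBad
    have hBadFin : Bad.Finite :=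
      Set.Finite.biUnion (Finset.range (m0+1)).finite_toSet
        (fun k _ => Set.Finite.preimage ((hinj k).injOn)
          (Polynomial.finite_setOf_isRoot hP))
    have hGoodInf : (Badᶜ : Set ℕ).Infinite := hBadFin.infinite_compl
    have himg : ((fun i : ℕ => -(i:ℂ)) '' Badᶜ).Infinite := by
      refine Set.Infinite.image ?_ hGoodInf
      intro a _ b _ hab
      simp only [neg_inj, Nat.cast_inj] at hab
      exact hab
    refine Set.Infinite.mono ?_ himg
    rintro z ⟨i, hi, rfl⟩
    have hPi : (∏ k ∈ Finset.range (m0+1), cc P (i+1+k)) ≠ 0 := by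
      rw [Finset.prod_ne_zero_iff]
      intro k hk
      have hcc : cc P (i+1+k) = P.eval (-(((i + 1 + k : ℕ)) : ℂ)) := by
        simp [cc]
      rw [hcc]
      intro hzero
      apply hi
      exact Set.mem_biUnion (by simpa using hk) hzero
    have h2 := key i (i + m0 + 1)
    have hp0 : (∑ m ∈ p.support,
        (p m).eval (-(i:ℂ)) * if i + m0 + 1 + m = i then 1 else 0) = 0 :=
      Finset.sum_eq_zero fun m _ => by
        rw [if_neg (by omega : ¬ i + m0 + 1 + m = i), mul_zero]
    rw [hp0, zero_add] at h2
    have hcond : ∀ m : ℕ, (i + m0 + 1 = i + m + 1) ↔ (m0 = m) := fun m => by omega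
    simp only [hcond, mul_ite, mul_one, mul_zero] at h2
    rw [Finset.sum_ite_eq q.support m0
      (fun m => (∏ k ∈ Finset.range (m+1), cc P (i+1+k)) * (q m).eval (-(i:ℂ))),
      if_pos hm] at h2
    have := mul_eq_zero.mp h2
    rcases this with hbad | hgood
    · exact absurd hbad hPi
    · exact hgood

end Aux13d

/-- For `σ(h) = h − 1` and `P ≠ 0` with `P(0) = 0`, the assignment
`h ↦ N`, `x ↦ U₋₁`, `y ↦ P(N)·U₁` defines an injective algebra homomorphism
`ρ : ℂ[h](σ, P) → End(V)`. -/
theorem stmt13 (σ : Polynomial ℂ ≃ₐ[ℂ] Polynomial ℂ) (hσ : σ X = X - C 1)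
    (P : Polynomial ℂ) (hP : P ≠ 0) (hP0 : P.eval 0 = 0) :
    ∃ ρ : GWAc σ P →ₐ[ℂ] Module.End ℂ (ℕ → ℂ),
      Function.Injective ρ ∧
      ρ (GWAc.h σ P) = Nop ∧
      ρ (GWAc.x σ P) = Um1 ∧
      ρ (GWAc.y σ P) = Polynomial.aeval Nop P * U1 := by
  classical
  set Yop : Module.End ℂ (ℕ → ℂ) := Polynomial.aeval Nop P * U1 with hYop
  set F : FreeAlgebra ℂ (Fin 3) →ₐ[ℂ] Module.End ℂ (ℕ → ℂ) :=
    FreeAlgebra.lift ℂ ![Nop, Um1, Yop] with hF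
  have h0 : F (ι ℂ 0) = Nop := by rw [hF, FreeAlgebra.lift_ι_apply]; rfl
  have h1 : F (ι ℂ 1) = Um1 := by rw [hF, FreeAlgebra.lift_ι_apply]; rfl
  have h2 : F (ι ℂ 2) = Yop := by rw [hF, FreeAlgebra.lift_ι_apply]; rfl
  have haev : ∀ r : Polynomial ℂ, F (aeval (ι ℂ 0) r) = aeval Nop r := by
    intro r
    rw [← h0]
    exact (aeval_algHom_apply F (ι ℂ 0) r).symm
  have hf : ∀ ⦃a b : FreeAlgebra ℂ (Fin 3)⦄, GWAcRel σ P a b → F a = F b := by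
    intro a b hab
    cases hab with
    | xh p =>
        rw [map_mul, map_mul, haev, haev, h1]
        exact opE1 σ hσ p
    | yh p =>
        rw [map_mul, map_mul, haev, haev, h2, hYop]
        exact opE2 σ hσ P p
    | yx =>
        rw [map_mul, haev, h1, h2, hYop]
        exact opE3 σ hσ P hP0
    | xy =>
        rw [map_mul, haev, h1, h2, hYop]
        exact opE4 σ hσ P
  set ρ : GWAc σ P →ₐ[ℂ] Module.End ℂ (ℕ → ℂ) :=
    RingQuot.liftAlgHom ℂ ⟨F, hf⟩ with hρ
  have hmk : ∀ a : FreeAlgebra ℂ (Fin 3),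
      ρ (RingQuot.mkAlgHom ℂ (GWAcRel σ P) a) = F a := by
    intro a
    rw [hρ, RingQuot.liftAlgHom_mkAlgHom_apply]
  have hρh : ρ (GWAc.h σ P) = Nop := (hmk _).trans h0
  have hρx : ρ (GWAc.x σ P) = Um1 := (hmk _).trans h1
  have hρy : ρ (GWAc.y σ P) = Yop := (hmk _).trans h2
  have hρφ : ∀ r : Polynomial ℂ, ρ (φg σ P r) = aeval Nop r := by
    intro r
    rw [← hρh]
    exact (aeval_algHom_apply ρ (GWAc.h σ P) r).symm
  have hL : ∀ p q : ℕ →₀ Polynomial ℂ,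
      ρ (Lmap σ P (p, q)) = (p.sum fun m r => Um1 ^ m * aeval Nop r)
        + (q.sum fun m r => Yop ^ (m+1) * aeval Nop r) := by
    intro p q
    rw [Lmap_apply, map_add, map_finsuppSum, map_finsuppSum]
    congr 1
    · exact Finsupp.sum_congr fun m _ => by rw [map_mul, map_pow, hρx, hρφ]
    · exact Finsupp.sum_congr fun m _ => by rw [map_mul, map_pow, hρy, hρφ]
  refine ⟨ρ, ?_, hρh, hρx, hρy⟩
  rw [injective_iff_map_eq_zero]
  intro a ha
  obtain ⟨⟨p, q⟩, rfl⟩ := Lmap_surjective σ P a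
  obtain ⟨hp, hq⟩ := coeffs_zero P hP p q (by rw [← hL p q]; exact ha)
  rw [hp, hq]
  exact map_zero _
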